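/- Let F₋(y) = −√(−2y)·tanh(√(−y/2)) for y ≤ 0. Then F₋ is differentiable on (−∞,0) with F₋'(y) = (1/(2cosh²√(−y/2)))·(1 + sinh(√(−2y))/√(−2y)), and F₋' : (−∞,0) → (0,1) is a bijection onto (0,1). -/

import Mathlib

/-
With `u = √(-y/2)` one has `F₋(y) = -2u·tanh u`, and the chain rule gives
`F₋'(y) = (tanh u / u + 1 / cosh² u) / 2`. Both summands decrease strictly on `(0, ∞)`
(the first because `sinh 2u > 2u`); their mean tends to `1` as `u → 0⁺` (the slope of `tanh`
at `0` is `1`) and to `0` as `u → ∞`. A continuous strictly decreasing function with these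
limits maps `(0, ∞)` bijectively onto `(0, 1)`, and `y ↦ √(-y/2)` maps `(-∞, 0)` bijectively
onto `(0, ∞)`.
-/

open Real Filter

/-- `F₋(y) = −√(−2y)·tanh(√(−y/2))`, the `θ ≤ 0` branch of the rescaled
limiting cumulant function of the time-averaged square-root process. -/
noncomputable def Fminus (y : ℝ) : ℝ :=
  -Real.sqrt (-2 * y) * Real.tanh (Real.sqrt (-y / 2))

/-- The claimed derivative of `F₋`. -/
noncomputable def FminusDeriv (y : ℝ) : ℝ :=
  1 / (2 * Real.cosh (Real.sqrt (-y / 2)) ^ 2) *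
    (1 + Real.sinh (Real.sqrt (-2 * y)) / Real.sqrt (-2 * y))

open Set Topology

theorem StrictAntiOn.bijOn_Ioi_Ioo {α δ : Type*} [ConditionallyCompleteLinearOrder α]
    [TopologicalSpace α] [OrderTopology α] [DenselyOrdered α] [NoMaxOrder α] [LinearOrder δ]
    [TopologicalSpace δ] [OrderClosedTopology δ] {f : α → δ} {a : α} {b c : δ}
    (hanti : StrictAntiOn f (Ioi a)) (hcont : ContinuousOn f (Ioi a))
    (hright : Tendsto f (𝓝[>] a) (𝓝 b)) (htop : Tendsto f atTop (𝓝 c)) :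
    BijOn f (Ioi a) (Ioo c b) := by
  have : Nonempty α := ⟨a⟩
  refine ⟨fun x hx => ⟨?_, ?_⟩, hanti.injOn, fun v hv => ?_⟩
  · obtain ⟨x', hxx'⟩ := exists_gt x
    have hx' : x' ∈ Ioi a := lt_trans hx hxx'
    refine lt_of_le_of_lt (le_of_tendsto htop ?_) (hanti hx hx' hxx')
    filter_upwards [eventually_gt_atTop x'] with y hy
    exact (hanti hx' (lt_trans hx' hy) hy).le
  · obtain ⟨x', hax', hx'x⟩ := exists_between (show a < x from hx)
    refine lt_of_lt_of_le (hanti hax' hx hx'x) (ge_of_tendsto hright ?_)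
    filter_upwards [Ioo_mem_nhdsGT hax'] with y hy
    exact (hanti hy.1 hax' hy.2).le
  · obtain ⟨p, hpv, hp⟩ :=
      ((hright.eventually (eventually_gt_nhds hv.2)).and self_mem_nhdsWithin).exists
    obtain ⟨q, hqv, hpq⟩ :=
      ((htop.eventually (eventually_lt_nhds hv.1)).and (eventually_gt_atTop p)).exists
    exact hcont.surjOn_Icc (lt_trans (show a < p from hp) hpq) hp ⟨hqv.le, hpv.le⟩

theorem Real.hasDerivAt_tanh (x : ℝ) : HasDerivAt tanh (1 / cosh x ^ 2) x := by
  have h := (hasDerivAt_sinh x).div (hasDerivAt_cosh x) (cosh_pos x).ne'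
  rw [← sq, ← sq, cosh_sq_sub_sinh_sq] at h
  rwa [show tanh = sinh / cosh from funext tanh_eq_sinh_div_cosh]

theorem tanh_div_self_strictAntiOn : StrictAntiOn (fun u => tanh u / u) (Ioi 0) := by
  have hderiv : ∀ u ∈ Ioi (0 : ℝ), HasDerivAt (fun u => tanh u / u)
      ((u / cosh u ^ 2 - tanh u) / u ^ 2) u := by
    intro u hu
    refine ((hasDerivAt_tanh u).div (hasDerivAt_id u) (ne_of_gt hu)).congr_deriv ?_
    simp only [id_eq]
    ring
  refine strictAntiOn_of_hasDerivWithinAt_neg (convex_Ioi 0)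
    (fun u hu => (hderiv u hu).continuousAt.continuousWithinAt)
    (fun u hu => (hderiv u (interior_subset hu)).hasDerivWithinAt) (fun u hu => ?_)
  rw [interior_Ioi] at hu
  have hu : 0 < u := hu
  have hsinh : 2 * u < 2 * sinh u * cosh u := sinh_two_mul u ▸ self_lt_sinh_iff.2 (by positivity)
  have hcosh := cosh_pos u
  refine div_neg_of_neg_of_pos (sub_neg.2 ?_) (by positivity)
  rw [tanh_eq_sinh_div_cosh, div_lt_div_iff₀ (by positivity) hcosh]
  nlinarith

theorem one_div_cosh_sq_strictAntiOn : StrictAntiOn (fun u => 1 / cosh u ^ 2) (Ici 0) := by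
  intro u hu v hv huv
  have := cosh_strictMonoOn hu hv huv
  have := cosh_pos u
  dsimp only
  gcongr

noncomputable def FminusDerivOfSqrt (u : ℝ) : ℝ := (tanh u / u + 1 / cosh u ^ 2) / 2

theorem strictAntiOn_FminusDerivOfSqrt : StrictAntiOn FminusDerivOfSqrt (Ioi 0) := by
  intro u hu v hv huv
  have htanh := tanh_div_self_strictAntiOn hu hv huv
  have hcosh := one_div_cosh_sq_strictAntiOn (mem_Ici_of_Ioi hu) (mem_Ici_of_Ioi hv) huv
  simp only [FminusDerivOfSqrt] at htanh hcosh ⊢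
  linarith

theorem continuousOn_FminusDerivOfSqrt : ContinuousOn FminusDerivOfSqrt (Ioi 0) := by
  intro u hu
  have htanh := (hasDerivAt_tanh u).continuousAt
  have hcosh : ContinuousAt (fun u => 1 / cosh u ^ 2) u := by fun_prop (disch := positivity)
  exact ((htanh.div continuousAt_id (ne_of_gt hu)).add hcosh).div_const 2 |>.continuousWithinAt

theorem tendsto_FminusDerivOfSqrt_nhdsGT_zero :
    Tendsto FminusDerivOfSqrt (𝓝[>] 0) (𝓝 1) := by
  have hslope := (hasDerivAt_tanh 0).tendsto_slope_zero_right
  simp only [zero_add, tanh_zero, sub_zero, smul_eq_mul, cosh_zero] at hslope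
  have hcosh : ContinuousAt (fun u => 1 / cosh u ^ 2) 0 := by fun_prop (disch := positivity)
  have hsum := ((hslope.congr fun u => inv_mul_eq_div u (tanh u)).add
    (hcosh.tendsto.mono_left nhdsWithin_le_nhds)).div_const 2
  rwa [cosh_zero, show ((1 : ℝ) / 1 ^ 2 + 1 / 1 ^ 2) / 2 = 1 by norm_num] at hsum

theorem tendsto_FminusDerivOfSqrt_atTop : Tendsto FminusDerivOfSqrt atTop (𝓝 0) := by
  refine tendsto_of_tendsto_of_tendsto_of_le_of_le' tendsto_const_nhds tendsto_inv_atTop_zero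
    ?_ ?_
  · filter_upwards [eventually_gt_atTop 0] with u hu
    have := sinh_pos_iff.2 hu
    have := cosh_pos u
    rw [FminusDerivOfSqrt, tanh_eq_sinh_div_cosh]
    positivity
  · filter_upwards [eventually_gt_atTop 0] with u hu
    have htanh : tanh u / u ≤ 1 / u := div_le_div_of_nonneg_right (tanh_lt_one u).le hu.le
    have hcosh : u < cosh u ^ 2 := by
      nlinarith [self_lt_sinh_iff.2 hu, sinh_lt_cosh u, one_le_cosh u]
    have := one_div_le_one_div_of_le hu hcosh.le
    rw [FminusDerivOfSqrt, ← one_div]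
    linarith

theorem bijOn_FminusDerivOfSqrt : BijOn FminusDerivOfSqrt (Ioi 0) (Ioo 0 1) :=
  strictAntiOn_FminusDerivOfSqrt.bijOn_Ioi_Ioo continuousOn_FminusDerivOfSqrt
    tendsto_FminusDerivOfSqrt_nhdsGT_zero tendsto_FminusDerivOfSqrt_atTop

theorem bijOn_sqrt_neg_div_two : BijOn (fun y => √(-y / 2)) (Iio 0) (Ioi 0) := by
  refine ⟨fun y hy => sqrt_pos.2 (by linarith [mem_Iio.1 hy]), fun y hy z hz hyz => ?_,
    fun u hu => ⟨-2 * u ^ 2, mem_Iio.2 (by nlinarith [mem_Ioi.1 hu]), ?_⟩⟩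
  · have := (sqrt_inj (by linarith [mem_Iio.1 hy]) (by linarith [mem_Iio.1 hz])).1 hyz
    linarith
  · dsimp only
    rw [show -(-2 * u ^ 2) / 2 = u ^ 2 by ring, sqrt_sq (le_of_lt hu)]

theorem sqrt_neg_two_mul (y : ℝ) : √(-2 * y) = 2 * √(-y / 2) := by
  rw [show -2 * y = 2 ^ 2 * (-y / 2) by ring, sqrt_mul (by positivity), sqrt_sq zero_le_two]

theorem FminusDeriv_eq_comp : FminusDeriv = FminusDerivOfSqrt ∘ fun y => √(-y / 2) := by
  funext y
  simp only [FminusDeriv, FminusDerivOfSqrt, Function.comp_apply, sqrt_neg_two_mul]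
  generalize √(-y / 2) = u
  rcases eq_or_ne u 0 with rfl | hu
  · simp
  · have := cosh_pos u
    rw [sinh_two_mul, tanh_eq_sinh_div_cosh]
    field_simp
    ring

theorem Fminus_eq_comp : Fminus = (fun u => -(2 * u) * tanh u) ∘ fun y => √(-y / 2) := by
  funext y
  simp only [Fminus, Function.comp_apply, sqrt_neg_two_mul]

theorem hasDerivAt_Fminus {y : ℝ} (hy : y < 0) : HasDerivAt Fminus (FminusDeriv y) y := by
  set u := √(-y / 2) with hu_def
  have hu : 0 < u := sqrt_pos.2 (by linarith)
  have hsqrt : HasDerivAt (fun y => √(-y / 2)) (-1 / 2 / (2 * u)) y :=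
    ((hasDerivAt_id y).neg.div_const 2).sqrt (by simp; linarith)
  have hG : HasDerivAt (fun u => -(2 * u) * tanh u) (-(2 * tanh u + 2 * u / cosh u ^ 2)) u := by
    refine (((hasDerivAt_id u).const_mul 2).neg.mul (hasDerivAt_tanh u)).congr_deriv ?_
    simp only [id_eq, Pi.neg_apply]
    ring
  rw [Fminus_eq_comp, FminusDeriv_eq_comp]
  refine (hG.comp y hsqrt).congr_deriv ?_
  have := cosh_pos u
  simp only [FminusDerivOfSqrt, Function.comp_apply, ← hu_def]
  field_simp

theorem stmt11 :
    (∀ y : ℝ, y < 0 → HasDerivAt Fminus (FminusDeriv y) y) ∧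
    Set.BijOn FminusDeriv (Set.Iio 0) (Set.Ioo 0 1) :=
  ⟨fun _ hy => hasDerivAt_Fminus hy,
    FminusDeriv_eq_comp ▸ bijOn_FminusDerivOfSqrt.comp bijOn_sqrt_neg_div_two⟩
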